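/- arXiv:2009.14141 — 3 statements merged into one kernel-verified Lean document; each statement's English description precedes it below -/
import Mathlib

section
/- The coefficient of m̃_μ in r_λ is zero unless μ is a refinement of λ (some puzzle of μ into λ exists), and equals 1 when μ = λ; consequently for each d the set {r_λ : λ ⊢ d} is a basis of the degree-d homogeneous symmetric functions. -/
open Finset
open scoped Classical

noncomputable section

/-- The multiset of (nonzero) exponents of a monomial. -/
def expParts (d : ℕ →₀ ℕ) : Multiset ℕ := d.support.val.map d

/-- `∏ i, n_i(m)!` where `n_i(m)` is the multiplicity of `i` in the multiset `m`. -/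
def multFact (m : Multiset ℕ) : ℕ := ∏ j ∈ m.toFinset, (m.count j).factorial

/-- The augmented monomial symmetric function indexed by a multiset of positive parts. -/
def mtilde (m : Multiset ℕ) : MvPowerSeries ℕ ℚ :=
  fun d => if expParts d = m then (multFact m : ℚ) else 0

/-- The chromatic symmetric function of a finite simple graph, as a power series in
countably many variables: the coefficient of a monomial `d` is the number of proper
colorings `κ : V → ℕ` in which color `c` is used exactly `d c` times. -/
def csf {V : Type} [Fintype V] (G : SimpleGraph V) : MvPowerSeries ℕ ℚ :=
  fun d => (Nat.card {κ : V → ℕ // (∀ v w, G.Adj v w → κ v ≠ κ w) ∧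
      ∀ c, (Finset.univ.filter (fun v => κ v = c)).card = d c} : ℚ)

/-- The complete multipartite graph with stable sets of sizes given by the list `l`. -/
def multipartite (l : List ℕ) : SimpleGraph (Σ j : Fin l.length, Fin (l.get j)) where
  Adj x y := x.1 ≠ y.1
  symm := ⟨fun _ _ h => Ne.symm h⟩
  loopless := ⟨fun _ h => h rfl⟩

/-- `r_λ`, the chromatic symmetric function of the complete multipartite graph `G_λ`. -/
def rOf (m : Multiset ℕ) : MvPowerSeries ℕ ℚ := csf (multipartite m.toList)

/-- A set partition (of the whole vertex set) is stable if each block is independent. -/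
def IsStable {V : Type} [Fintype V] [DecidableEq V] (G : SimpleGraph V)
    (P : Finpartition (Finset.univ : Finset V)) : Prop :=
  ∀ b ∈ P.parts, ∀ v ∈ b, ∀ w ∈ b, ¬ G.Adj v w

/-- The multiset of block sizes of a finpartition. -/
def typeOf {V : Type} [DecidableEq V] {s : Finset V} (P : Finpartition s) : Multiset ℕ :=
  P.parts.val.map Finset.card

/-- The puzzles of `μ` into the list of parts `l`. -/
def puzzles (mu : Multiset ℕ) (l : List ℕ) : Finset (Fin l.length → Multiset ℕ) :=
  (Fintype.piFinset fun _ => mu.powerset.toFinset).filter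
    (fun g => (∑ i, g i) = mu ∧ ∀ i, (g i).sum = l.get i)

/-- A canonical monomial whose exponents are the parts of `m`. -/
def dmon (m : Multiset ℕ) : ℕ →₀ ℕ := m.toList.toFinsupp

/-- `r_λ` as a family indexed by partitions of `n`. -/
def rBasis (n : ℕ) (lam : Nat.Partition n) : MvPowerSeries ℕ ℚ := rOf lam.parts

/-- The space `Λ^n`: symmetric power series homogeneous of degree `n`. -/
def symHomog (n : ℕ) : Set (MvPowerSeries ℕ ℚ) :=
  {f | (∀ (σ : Equiv.Perm ℕ) (d : ℕ →₀ ℕ),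
          MvPowerSeries.coeff (d.mapDomain σ) f = MvPowerSeries.coeff d f) ∧
       (∀ d : ℕ →₀ ℕ, MvPowerSeries.coeff d f ≠ 0 → (d.sum fun _ v => v) = n)}

/-!
A proper colouring of the complete multipartite graph `G_λ` never gives one colour to two
different blocks, so grouping the colour classes of a colouring of type `μ` block by block
yields a puzzle of `μ` into `λ`. Hence `μ` has at least as many parts as `λ`, with equality only
for `μ = λ`; and a colouring of type `λ` must give each block a colour class of its own, so these
colourings are the size-preserving permutations of the blocks, `∏ᵢ nᵢ(λ)!` of them. Writing a
symmetric homogeneous series in the `m̃_μ`, the transition matrix from the `r_λ` is thus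
unitriangular with respect to the number of parts, which gives independence and spanning.
-/

section Triangular

variable {ι R M : Type*} [Fintype ι] [AddCommGroup M]

lemma mem_span_range_of_unitriangular [Ring R] [Module R M] (level : ι → ℕ) {v w : ι → M}
    (a : ι → ι → R) (hv : ∀ i, v i = ∑ j, a i j • w j) (hdiag : ∀ i, a i i = 1)
    (htri : ∀ i j, a i j ≠ 0 → i ≠ j → level i < level j) (i : ι) :
    w i ∈ Submodule.span R (Set.range v) := by
  set N := Finset.univ.sup level
  -- downward induction on `level i`
  induction hk : N - level i using Nat.strong_induction_on generalizing i with
  | _ k ih =>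
    have hwi : w i = v i - ∑ j ∈ Finset.univ.erase i, a i j • w j := by
      rw [hv i, ← Finset.add_sum_erase _ _ (Finset.mem_univ i), hdiag, one_smul,
        add_sub_cancel_right]
    rw [hwi]
    refine Submodule.sub_mem _ (Submodule.subset_span ⟨i, rfl⟩) (Submodule.sum_mem _ fun j hj => ?_)
    by_cases haij : a i j = 0
    · rw [haij, zero_smul]
      exact Submodule.zero_mem _
    have hlt := htri i j haij (Finset.ne_of_mem_erase hj).symm
    have hle : level j ≤ N := Finset.le_sup (Finset.mem_univ j)
    exact Submodule.smul_mem _ _ (ih (N - level j) (by omega) j rfl)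

lemma linearIndependent_of_triangular [CommRing R] [NoZeroDivisors R] [Module R M]
    (level : ι → ℕ) {v : ι → M} (φ : ι → Module.Dual R M) (hdiag : ∀ i, φ i (v i) ≠ 0)
    (htri : ∀ i j, φ j (v i) ≠ 0 → i ≠ j → level i < level j) : LinearIndependent R v := by
  rw [Fintype.linearIndependent_iff]
  intro g hg
  by_contra! hne
  obtain ⟨i₀, hi₀, hmin⟩ := Finset.exists_min_image (Finset.univ.filter fun i => g i ≠ 0) level
    (by simpa [Finset.filter_nonempty_iff] using hne)
  have hsum := congrArg (φ i₀) hg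
  rw [map_sum, map_zero, Finset.sum_eq_single i₀] at hsum
  · rw [map_smul, smul_eq_mul] at hsum
    exact mul_ne_zero (Finset.mem_filter.mp hi₀).2 (hdiag i₀) hsum
  · intro i _ hi
    by_cases hgi : g i = 0
    · rw [hgi, zero_smul, map_zero]
    rw [map_smul, smul_eq_mul]
    by_contra hφ
    have hlt := htri i i₀ (right_ne_zero_of_mul hφ) hi
    exact (hmin i (Finset.mem_filter.mpr ⟨Finset.mem_univ i, hgi⟩)).not_gt hlt
  · exact fun h => absurd (Finset.mem_univ i₀) h

end Triangular

lemma Finset.sum_singleton_eq_map_val {α β : Type*} (s : Finset α) (f : α → β) :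
    ∑ a ∈ s, ({f a} : Multiset β) = s.val.map f := by
  rw [Finset.sum_eq_multiset_sum, ← Multiset.sum_map_singleton (s.val.map f), Multiset.map_map]
  rfl

lemma card_support_fiber (d : ℕ →₀ ℕ) (k : ℕ) :
    Fintype.card {x : d.support // d x = k} = (expParts d).count k := by
  rw [expParts, Multiset.count_map, Fintype.card_subtype, Finset.univ_eq_attach,
    Finset.filter_attach (fun x => d x = k), Finset.card_map, Finset.card_attach]
  simp only [eq_comm]
  rfl

lemma exists_perm_mapDomain_eq_of_expParts_eq {d e : ℕ →₀ ℕ} (h : expParts d = expParts e) :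
    ∃ σ : Equiv.Perm ℕ, e.mapDomain σ = d := by
  have fibers (k : ℕ) : {x : e.support // e x = k} ≃ {x : d.support // d x = k} :=
    Fintype.equivOfCardEq (by rw [card_support_fiber, card_support_fiber, h])
  set σ := (Equiv.ofFiberEquiv fibers).extendSubtype
  have hσ (y : ℕ) : d (σ y) = e y := by
    by_cases hy : y ∈ e.support
    · rw [Equiv.extendSubtype_apply_of_mem _ _ hy]
      exact Equiv.ofFiberEquiv_map fibers ⟨y, hy⟩
    · rw [Finsupp.notMem_support_iff.mp hy,
        ← Finsupp.notMem_support_iff.mp (Equiv.extendSubtype_not_mem _ _ hy)]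
  refine ⟨σ, Finsupp.ext fun x => ?_⟩
  rw [Finsupp.mapDomain_equiv_apply, ← hσ, Equiv.apply_symm_apply]

lemma expParts_dmon {m : Multiset ℕ} (hm : ∀ x ∈ m, 0 < x) : expParts (dmon m) = m := by
  have hsupp : (dmon m).support = Finset.range m.toList.length := by
    refine (List.toFinsupp_support _).trans (Finset.filter_true_of_mem fun i hi => ?_)
    rw [List.getD_eq_getElem _ _ (Finset.mem_range.mp hi)]
    exact (hm _ (Multiset.mem_toList.mp (List.getElem_mem _))).ne'
  rw [expParts, hsupp, Finset.range_val, Multiset.range, Multiset.map_coe]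
  conv_rhs => rw [← Multiset.coe_toList m]
  congr 1
  refine List.ext_getElem (by simp) fun i _ hi => ?_
  simp [dmon, List.getElem?_eq_getElem hi]

lemma expParts_pos {d : ℕ →₀ ℕ} {k : ℕ} (hk : k ∈ expParts d) : 0 < k := by
  obtain ⟨a, ha, rfl⟩ := Multiset.mem_map.mp hk
  exact Nat.pos_of_ne_zero (Finsupp.mem_support_iff.mp ha)

lemma multFact_ne_zero (m : Multiset ℕ) : (multFact m : ℚ) ≠ 0 :=
  Nat.cast_ne_zero.mpr (Finset.prod_ne_zero_iff.mpr fun _ _ => Nat.factorial_ne_zero _)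

lemma coeff_dmon_expParts {n : ℕ} {f : MvPowerSeries ℕ ℚ} (hf : f ∈ symHomog n) (d : ℕ →₀ ℕ) :
    MvPowerSeries.coeff (dmon (expParts d)) f = MvPowerSeries.coeff d f := by
  obtain ⟨σ, hσ⟩ := exists_perm_mapDomain_eq_of_expParts_eq (expParts_dmon fun _ => expParts_pos)
  rw [← hσ, hf.1]

lemma coeff_mtilde (m : Multiset ℕ) (d : ℕ →₀ ℕ) :
    MvPowerSeries.coeff d (mtilde m) = if expParts d = m then (multFact m : ℚ) else 0 := rfl

lemma eq_sum_mtilde_of_mem_symHomog {n : ℕ} {f : MvPowerSeries ℕ ℚ} (hf : f ∈ symHomog n) :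
    f = ∑ mu : Nat.Partition n,
      (MvPowerSeries.coeff (dmon mu.parts) f / multFact mu.parts) • mtilde mu.parts := by
  ext d
  simp only [map_sum, map_smul, coeff_mtilde, smul_eq_mul, mul_ite, mul_zero,
    div_mul_cancel₀ _ (multFact_ne_zero _)]
  by_cases hd : ∃ mu : Nat.Partition n, mu.parts = expParts d
  · obtain ⟨mu₀, hmu₀⟩ := hd
    have hiff (mu : Nat.Partition n) : expParts d = mu.parts ↔ mu₀ = mu := by
      rw [← hmu₀, Nat.Partition.ext_iff, eq_comm]
    simp only [hiff, Finset.sum_ite_eq, Finset.mem_univ, if_true, hmu₀, coeff_dmon_expParts hf]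
  · have hfd : MvPowerSeries.coeff d f = 0 := by
      by_contra hfd
      exact hd ⟨⟨expParts d, expParts_pos, hf.2 d hfd⟩, rfl⟩
    rw [hfd, Finset.sum_eq_zero fun mu _ => if_neg fun h => hd ⟨mu, h.symm⟩]

abbrev ColoringOfType {V : Type} [Fintype V] (G : SimpleGraph V) (d : ℕ →₀ ℕ) : Type :=
  {κ : V → ℕ // (∀ v w, G.Adj v w → κ v ≠ κ w) ∧
    ∀ c, (Finset.univ.filter (fun v => κ v = c)).card = d c}

section Coloring

variable {V : Type} [Fintype V] (G : SimpleGraph V)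

lemma coeff_csf (d : ℕ →₀ ℕ) :
    MvPowerSeries.coeff d (csf G) = Nat.card (ColoringOfType G d) := rfl

def coloringOfTypeMapDomainEquiv (σ : Equiv.Perm ℕ) (d : ℕ →₀ ℕ) :
    ColoringOfType G d ≃ ColoringOfType G (d.mapDomain σ) :=
  Equiv.subtypeEquiv (Equiv.arrowCongr (Equiv.refl V) σ) fun κ => by
    refine and_congr (forall₂_congr fun v w => imp_congr_right fun _ => σ.injective.ne_iff.symm) ?_
    refine (σ.symm.forall_congr fun c => ?_).symm
    simp [Finsupp.mapDomain_equiv_apply, ← σ.eq_symm_apply]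

lemma coeff_mapDomain_csf (σ : Equiv.Perm ℕ) (d : ℕ →₀ ℕ) :
    MvPowerSeries.coeff (d.mapDomain σ) (csf G) = MvPowerSeries.coeff d (csf G) := by
  rw [coeff_csf, coeff_csf, Nat.card_congr (coloringOfTypeMapDomainEquiv G σ d)]

lemma mem_support_of_coloringOfType {d : ℕ →₀ ℕ} (κ : ColoringOfType G d) (v : V) :
    κ.1 v ∈ d.support := by
  rw [Finsupp.mem_support_iff, ← κ.2.2 (κ.1 v)]
  exact Finset.card_ne_zero_of_mem (Finset.mem_filter.mpr ⟨Finset.mem_univ v, rfl⟩)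

lemma degree_eq_card_of_coloringOfType {d : ℕ →₀ ℕ} (κ : ColoringOfType G d) :
    (d.sum fun _ k => k) = Fintype.card V := by
  rw [← Finset.card_univ, Finset.card_eq_sum_card_fiberwise
    (fun v _ => mem_support_of_coloringOfType G κ v), Finsupp.sum]
  exact Finset.sum_congr rfl fun c _ => (κ.2.2 c).symm

lemma degree_eq_card_of_coeff_csf_ne_zero {d : ℕ →₀ ℕ}
    (h : MvPowerSeries.coeff d (csf G) ≠ 0) : (d.sum fun _ k => k) = Fintype.card V := by
  rw [coeff_csf, Nat.cast_ne_zero, Nat.card_ne_zero] at h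
  exact degree_eq_card_of_coloringOfType G h.1.some

end Coloring

def symHomogSubmodule (n : ℕ) : Submodule ℚ (MvPowerSeries ℕ ℚ) where
  carrier := symHomog n
  add_mem' := by
    rintro f g ⟨hf, hf'⟩ ⟨hg, hg'⟩
    refine ⟨fun σ d => by rw [map_add, map_add, hf, hg], fun d h => ?_⟩
    by_cases hfd : MvPowerSeries.coeff d f = 0
    · exact hg' d (by simpa [hfd] using h)
    · exact hf' d hfd
  zero_mem' := ⟨by simp, by simp⟩
  smul_mem' := by
    rintro c f ⟨hf, hf'⟩
    exact ⟨fun σ d => by rw [map_smul, map_smul, hf],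
      fun d h => hf' d fun h0 => h (by rw [map_smul, h0, smul_zero])⟩

lemma card_multipartite (l : List ℕ) :
    Fintype.card (Σ j : Fin l.length, Fin (l.get j)) = l.sum := by
  simp [Fintype.card_sigma]

lemma rOf_mem_symHomog (m : Multiset ℕ) : rOf m ∈ symHomog m.sum := by
  refine ⟨coeff_mapDomain_csf _, fun d h => ?_⟩
  rw [degree_eq_card_of_coeff_csf_ne_zero _ h, card_multipartite, Multiset.sum_toList]

lemma card_filter_fst_eq (l : List ℕ) (i : Fin l.length) :
    (Finset.univ.filter fun v : (Σ j : Fin l.length, Fin (l.get j)) => v.1 = i).card = l.get i := by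
  rw [← Fintype.card_subtype, Fintype.card_congr (Equiv.sigmaSubtype i), Fintype.card_fin]

lemma fst_eq_of_coloringOfType_eq {l : List ℕ} {d : ℕ →₀ ℕ} (κ : ColoringOfType (multipartite l) d)
    {v w : Σ j : Fin l.length, Fin (l.get j)} (h : κ.1 v = κ.1 w) : v.1 = w.1 :=
  by_contra fun hne => κ.2.1 v w hne h

lemma puzzles_nonempty_of_coloringOfType {l : List ℕ} {d : ℕ →₀ ℕ}
    (κ : ColoringOfType (multipartite l) d) : (puzzles (expParts d) l).Nonempty := by
  set block : Fin l.length → Finset (Σ j : Fin l.length, Fin (l.get j)) :=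
    fun i => Finset.univ.filter fun v => v.1 = i
  set colors : Fin l.length → Finset ℕ := fun i => (block i).image κ.1
  have colors_disjoint : Set.PairwiseDisjoint ↑(Finset.univ : Finset (Fin l.length)) colors := by
    intro i _ j _ hij
    rw [Function.onFun, Finset.disjoint_left]
    simp only [colors, block, Finset.mem_image, Finset.mem_filter, Finset.mem_univ, true_and]
    rintro _ ⟨v, rfl, rfl⟩ ⟨w, rfl, hw⟩
    exact hij (fst_eq_of_coloringOfType_eq κ hw).symm
  have colors_biUnion : Finset.univ.biUnion colors = d.support := by
    ext c
    simp only [colors, block, Finset.mem_biUnion, Finset.mem_image, Finset.mem_filter,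
      Finset.mem_univ, true_and]
    constructor
    · rintro ⟨_, v, -, rfl⟩
      exact mem_support_of_coloringOfType _ κ v
    · intro hc
      rw [Finsupp.mem_support_iff, ← κ.2.2 c, Finset.card_ne_zero] at hc
      obtain ⟨v, hv⟩ := hc
      exact ⟨v.1, v, rfl, (Finset.mem_filter.mp hv).2⟩
  have sum_eq : ∑ i, (colors i).val.map d = expParts d := by
    simp_rw [← Finset.sum_singleton_eq_map_val]
    rw [← Finset.sum_biUnion colors_disjoint, colors_biUnion, Finset.sum_singleton_eq_map_val]
    rfl
  have block_sum (i : Fin l.length) : ((colors i).val.map d).sum = l.get i := by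
    rw [Finset.sum_map_val, ← card_filter_fst_eq l i, Finset.card_eq_sum_card_image κ.1 (block i)]
    refine Finset.sum_congr rfl fun c hc => ?_
    obtain ⟨w, hw, rfl⟩ := Finset.mem_image.mp hc
    rw [← κ.2.2]
    congr 1
    ext v
    simp only [block, Finset.mem_filter, Finset.mem_univ, true_and] at hw ⊢
    exact ⟨fun h => ⟨(fst_eq_of_coloringOfType_eq κ h).trans hw, h⟩, And.right⟩
  refine ⟨fun i => (colors i).val.map d, Finset.mem_filter.mpr ⟨?_, sum_eq, block_sum⟩⟩
  refine Fintype.mem_piFinset.mpr fun i => Multiset.mem_toFinset.mpr (Multiset.mem_powerset.mpr ?_)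
  exact sum_eq ▸ Finset.single_le_sum (fun _ _ => Multiset.zero_le _) (Finset.mem_univ i)

lemma coeff_rOf_eq_zero_of_puzzles_eq_empty {lam mu : Multiset ℕ} (hmu : ∀ x ∈ mu, 0 < x)
    (h : puzzles mu lam.toList = ∅) : MvPowerSeries.coeff (dmon mu) (rOf lam) = 0 := by
  rw [rOf, coeff_csf, Nat.cast_eq_zero, Nat.card_eq_zero]
  refine Or.inl ⟨fun κ => ?_⟩
  have hne := puzzles_nonempty_of_coloringOfType κ
  rw [expParts_dmon hmu, h] at hne
  exact Finset.not_nonempty_empty hne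

lemma length_le_card_of_mem_puzzles {mu : Multiset ℕ} {l : List ℕ} (hl : ∀ x ∈ l, 0 < x)
    {g : Fin l.length → Multiset ℕ} (hg : g ∈ puzzles mu l) :
    l.length ≤ Multiset.card mu ∧ (l.length = Multiset.card mu → mu = l) := by
  obtain ⟨-, hsum, hparts⟩ := Finset.mem_filter.mp hg
  have hcard : Multiset.card mu = ∑ i, Multiset.card (g i) := by rw [← hsum, Multiset.card_sum]
  have one_le (i : Fin l.length) : 1 ≤ Multiset.card (g i) := by
    refine Multiset.card_pos.mpr fun h0 => ?_
    have := hl _ (List.get_mem l i)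
    rw [← hparts i, h0, Multiset.sum_zero] at this
    exact this.false
  have hlen : l.length = ∑ _i : Fin l.length, 1 := by simp
  refine ⟨hlen.trans_le (hcard ▸ Finset.sum_le_sum fun i _ => one_le i), fun heq => ?_⟩
  have card_eq_one (i : Fin l.length) : Multiset.card (g i) = 1 :=
    ((Finset.sum_eq_sum_iff_of_le fun i _ => one_le i).mp (hlen.symm.trans (heq.trans hcard)) i
      (Finset.mem_univ i)).symm
  have singleton (i : Fin l.length) : g i = {l.get i} := by
    obtain ⟨a, ha⟩ := Multiset.card_eq_one.mp (card_eq_one i)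
    rw [← hparts i, ha, Multiset.sum_singleton]
  rw [← hsum, Finset.sum_congr rfl fun i _ => singleton i, Finset.sum_singleton_eq_map_val,
    Fin.univ_val_map, List.ofFn_get]

lemma card_lt_card_of_coeff_rOf_ne_zero {lam mu : Multiset ℕ} (hlam : ∀ x ∈ lam, 0 < x)
    (hmu : ∀ x ∈ mu, 0 < x) (h : MvPowerSeries.coeff (dmon mu) (rOf lam) ≠ 0) (hne : lam ≠ mu) :
    Multiset.card lam < Multiset.card mu := by
  obtain ⟨g, hg⟩ := Finset.nonempty_iff_ne_empty.mpr
    (mt (coeff_rOf_eq_zero_of_puzzles_eq_empty hmu) h)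
  obtain ⟨hle, heq⟩ := length_le_card_of_mem_puzzles
    (fun x hx => hlam x (Multiset.mem_toList.mp hx)) hg
  rw [Multiset.length_toList] at hle heq
  exact hle.lt_of_ne fun hcard => hne (by rw [heq hcard, Multiset.coe_toList])

lemma coe_eq_univ_val_map_get {α : Type*} (l : List α) :
    (l : Multiset α) = Finset.univ.val.map l.get := by
  rw [Fin.univ_val_map, List.ofFn_get]

lemma card_fiber_get (l : List ℕ) (b : ℕ) :
    Fintype.card {i : Fin l.length // l.get i = b} = l.count b := by
  rw [← Multiset.coe_count, coe_eq_univ_val_map_get, Multiset.count_map, Fintype.card_subtype,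
    Finset.card_def, Finset.filter_val]
  simp only [eq_comm]

lemma multFact_coe (l : List ℕ) :
    multFact l = Fintype.card {σ : Equiv.Perm (Fin l.length) // l.get ∘ σ = l.get} := by
  rw [DomMulAct.stabilizer_card', multFact]
  have himage : Finset.univ.image l.get = (l : Multiset ℕ).toFinset := by
    ext b
    simp [List.mem_iff_get]
  simp only [himage, card_fiber_get, Multiset.coe_count]

section DiagonalColorings

variable {l : List ℕ}

lemma lt_length_of_coloringOfType_toFinsupp (κ : ColoringOfType (multipartite l) l.toFinsupp)
    (v : Σ j : Fin l.length, Fin (l.get j)) : κ.1 v < l.length :=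
  Finset.mem_range.mp (List.toFinsupp_support_subset _ (mem_support_of_coloringOfType _ κ v))

lemma exists_perm_of_coloringOfType_toFinsupp (hl : ∀ x ∈ l, 0 < x)
    (κ : ColoringOfType (multipartite l) l.toFinsupp) :
    ∃ σ : Equiv.Perm (Fin l.length), l.get ∘ σ = l.get ∧ ∀ v, κ.1 v = σ v.1 := by
  let root (j : Fin l.length) : Σ j : Fin l.length, Fin (l.get j) :=
    ⟨j, ⟨0, hl _ (List.get_mem l j)⟩⟩
  let τ (j : Fin l.length) : Fin l.length :=
    ⟨κ.1 (root j), lt_length_of_coloringOfType_toFinsupp κ _⟩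
  have τ_injective : Function.Injective τ := fun i j h =>
    by_contra fun hne => κ.2.1 (root i) (root j) hne (congrArg Fin.val h)
  let σ := Equiv.ofBijective τ (Finite.injective_iff_bijective.mp τ_injective)
  have class_subset (j : Fin l.length) :
      Finset.univ.filter (fun v => κ.1 v = τ j) ⊆ Finset.univ.filter (fun v => v.1 = j) :=
    fun v hv => Finset.mem_filter.mpr
      ⟨Finset.mem_univ v, fst_eq_of_coloringOfType_eq κ (Finset.mem_filter.mp hv).2⟩
  have card_class (j : Fin l.length) :
      (Finset.univ.filter (fun v => κ.1 v = τ j)).card = l.get (τ j) := by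
    rw [κ.2.2, List.toFinsupp_apply_fin, List.get_eq_getElem, Fin.getElem_fin]
  have get_le (j : Fin l.length) : l.get (τ j) ≤ l.get j := by
    rw [← card_class, ← card_filter_fst_eq l j]
    exact Finset.card_le_card (class_subset j)
  -- `τ` permutes the blocks, so the inequalities `get_le` sum to an equality
  have get_eq (j : Fin l.length) : l.get (τ j) = l.get j :=
    (Finset.sum_eq_sum_iff_of_le fun j _ => get_le j).mp (Equiv.sum_comp σ l.get) j
      (Finset.mem_univ j)
  have class_eq (j : Fin l.length) :
      Finset.univ.filter (fun v => κ.1 v = τ j) = Finset.univ.filter (fun v => v.1 = j) :=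
    Finset.eq_of_subset_of_card_le (class_subset j)
      (by rw [card_class, card_filter_fst_eq, get_eq])
  refine ⟨σ, funext get_eq, fun v => ?_⟩
  have hv : v ∈ Finset.univ.filter (fun w => κ.1 w = τ v.1) := by
    rw [class_eq]
    exact Finset.mem_filter.mpr ⟨Finset.mem_univ v, rfl⟩
  exact (Finset.mem_filter.mp hv).2

lemma card_filter_perm_fst_eq {σ : Equiv.Perm (Fin l.length)} (hσ : l.get ∘ σ = l.get) (c : ℕ) :
    (Finset.univ.filter fun v : (Σ j : Fin l.length, Fin (l.get j)) => (σ v.1 : ℕ) = c).card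
      = l.toFinsupp c := by
  by_cases hc : c < l.length
  · have hclass : Finset.univ.filter (fun v : (Σ j : Fin l.length, Fin (l.get j)) =>
        (σ v.1 : ℕ) = c) = Finset.univ.filter (fun v => v.1 = σ.symm ⟨c, hc⟩) := by
      ext v
      simp [Equiv.eq_symm_apply, Fin.ext_iff]
    rw [hclass, card_filter_fst_eq, ← congrFun hσ, Function.comp_apply, Equiv.apply_symm_apply,
      List.toFinsupp_apply_lt l c hc, List.get_eq_getElem]
  · rw [List.toFinsupp_apply_le l c (not_lt.mp hc), Finset.card_eq_zero, Finset.filter_eq_empty_iff]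
    exact fun v _ => ((σ v.1).isLt.trans_le (not_lt.mp hc)).ne

def coloringOfPerm (σ : {σ : Equiv.Perm (Fin l.length) // l.get ∘ σ = l.get}) :
    ColoringOfType (multipartite l) l.toFinsupp :=
  ⟨fun v => σ.1 v.1, fun _ _ hvw h => hvw (σ.1.injective (Fin.ext h)),
    card_filter_perm_fst_eq σ.2⟩

lemma card_coloringOfType_toFinsupp (hl : ∀ x ∈ l, 0 < x) :
    Nat.card (ColoringOfType (multipartite l) l.toFinsupp) = multFact l := by
  rw [multFact_coe, ← Nat.card_eq_fintype_card]
  refine (Nat.card_eq_of_bijective coloringOfPerm ⟨fun σ τ h => ?_, fun κ => ?_⟩).symm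
  · refine Subtype.ext (Equiv.ext fun j => Fin.ext ?_)
    exact congrFun (congrArg Subtype.val h) ⟨j, ⟨0, hl _ (List.get_mem l j)⟩⟩
  · obtain ⟨σ, hσ, hκ⟩ := exists_perm_of_coloringOfType_toFinsupp hl κ
    exact ⟨⟨σ, hσ⟩, Subtype.ext (funext fun v => (hκ v).symm)⟩

end DiagonalColorings

lemma coeff_dmon_rOf_self {m : Multiset ℕ} (hm : ∀ x ∈ m, 0 < x) :
    MvPowerSeries.coeff (dmon m) (rOf m) = multFact m := by
  rw [rOf, coeff_csf, dmon,
    card_coloringOfType_toFinsupp fun x hx => hm x (Multiset.mem_toList.mp hx), Multiset.coe_toList]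

lemma rBasis_mem_symHomog (n : ℕ) (lam : Nat.Partition n) : rBasis n lam ∈ symHomog n := by
  have h := rOf_mem_symHomog lam.parts
  rwa [lam.parts_sum] at h

lemma card_lt_card_of_coeff_rBasis_ne_zero {n : ℕ} {lam mu : Nat.Partition n}
    (h : MvPowerSeries.coeff (dmon mu.parts) (rBasis n lam) ≠ 0) (hne : lam ≠ mu) :
    Multiset.card lam.parts < Multiset.card mu.parts :=
  card_lt_card_of_coeff_rOf_ne_zero (fun _ => lam.parts_pos) (fun _ => mu.parts_pos) h
    (mt Nat.Partition.ext hne)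

lemma linearIndependent_rBasis (n : ℕ) : LinearIndependent ℚ (rBasis n) := by
  refine linearIndependent_of_triangular (fun lam : Nat.Partition n => Multiset.card lam.parts)
    (fun mu => MvPowerSeries.coeff (dmon mu.parts)) (fun lam => ?_)
    fun _ _ => card_lt_card_of_coeff_rBasis_ne_zero
  rw [rBasis, coeff_dmon_rOf_self fun _ => lam.parts_pos]
  exact multFact_ne_zero _

lemma mtilde_mem_span_rBasis {n : ℕ} (mu : Nat.Partition n) :
    mtilde mu.parts ∈ Submodule.span ℚ (Set.range (rBasis n)) := by
  refine mem_span_range_of_unitriangular (fun mu : Nat.Partition n => Multiset.card mu.parts)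
    (fun lam mu => MvPowerSeries.coeff (dmon mu.parts) (rBasis n lam) / multFact mu.parts)
    (fun lam => eq_sum_mtilde_of_mem_symHomog (rBasis_mem_symHomog n lam)) (fun lam => ?_)
    (fun _ _ h => card_lt_card_of_coeff_rBasis_ne_zero (left_ne_zero_of_mul h)) mu
  rw [rBasis, coeff_dmon_rOf_self fun _ => lam.parts_pos, div_self (multFact_ne_zero _)]

lemma span_rBasis_eq_symHomog (n : ℕ) :
    (Submodule.span ℚ (Set.range (rBasis n)) : Set (MvPowerSeries ℕ ℚ)) = symHomog n := by
  refine subset_antisymm ?_ fun f hf => ?_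
  · exact (Submodule.span_le (p := symHomogSubmodule n)).mpr
      (Set.range_subset_iff.mpr (rBasis_mem_symHomog n))
  rw [eq_sum_mtilde_of_mem_symHomog hf]
  exact Submodule.sum_mem _ fun mu _ => Submodule.smul_mem _ _ (mtilde_mem_span_rBasis mu)

/-- `[m̃_μ] r_λ = 0` unless some puzzle of `μ` into `λ` exists, and `= 1` when `μ = λ`;
consequently `{r_λ : λ ⊢ n}` is a basis of the degree-`n` homogeneous symmetric
functions (it is linearly independent and spans). -/
theorem stmt9 (n : ℕ) :
    (∀ lam mu : Nat.Partition n,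
      (puzzles mu.parts lam.parts.toList = ∅ →
        (MvPowerSeries.coeff (dmon mu.parts) (rOf lam.parts)) / (multFact mu.parts : ℚ)
          = 0) ∧
      (mu = lam →
        (MvPowerSeries.coeff (dmon mu.parts) (rOf lam.parts)) / (multFact mu.parts : ℚ)
          = 1)) ∧
    LinearIndependent ℚ (rBasis n) ∧
    (Submodule.span ℚ (Set.range (rBasis n)) : Set (MvPowerSeries ℕ ℚ)) = symHomog n := by
  refine ⟨fun lam mu => ⟨fun h => ?_, ?_⟩, linearIndependent_rBasis n, span_rBasis_eq_symHomog n⟩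
  · rw [coeff_rOf_eq_zero_of_puzzles_eq_empty (fun _ => mu.parts_pos) h, zero_div]
  · rintro rfl
    rw [coeff_dmon_rOf_self fun _ => mu.parts_pos, div_self (multFact_ne_zero _)]
end
end

section
/- For the complete multipartite graph G_λ on n = |λ| vertices with maximal stable partition P of type λ, and any partition μ ⊢ n: the sum over all set partitions π refining P of the coefficient [r_μ] m̃_{λ(π)} equals the Kronecker delta δ_{λ,μ}. -/
open Finset
open scoped Classical

noncomputable section

/-!
A proper colouring `κ` of `G` is the same as the stable partition `π` of `V` into its colour
classes together with an injective labelling of the blocks by colours. The labellings realising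
the monomial `x^d` are the bijections from the blocks onto `supp d` matching block sizes with
exponents: there are `multFact λ(π)` of them if `λ(π)` is the type of `d`, and none otherwise.
Hence `X_G = ∑_{π stable} m̃_{λ(π)}`.

In `G_λ` the stable partitions are exactly the refinements of the partition `P` into the parts
of the graph, so `r_λ = ∑_{π ≤ P} m̃_{λ(π)} = ∑_μ (∑_{π ≤ P} [r_μ] m̃_{λ(π)}) r_μ`, and it
remains to see that the `r_μ` are linearly independent. A stable partition of `G_ν` has at
least `ℓ(ν)` blocks, with equality only for the partition into parts; so `r_ν` contains no
monomial in fewer than `ℓ(ν)` variables, and among those in exactly `ℓ(ν)` variables only the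
monomials of type `ν`. In a vanishing combination, a `ν` of minimal length with nonzero
coefficient therefore yields a contradiction at the monomial `x^ν`.
-/

section CompatibleEquiv

variable {α β : Type} [Fintype α] [Fintype β]

theorem card_fiber_eq_count (u : α → ℕ) (j : ℕ) :
    Fintype.card {x // u x = j} = (univ.val.map u).count j := by
  rw [Fintype.card_subtype, Multiset.count_map]
  exact congrArg Multiset.card (Multiset.filter_congr fun x _ => eq_comm)

theorem card_equiv_comp_eq (u : α → ℕ) (v : β → ℕ) (h : univ.val.map u = univ.val.map v) :
    Nat.card {e : α ≃ β // ∀ x, v (e x) = u x} = multFact (univ.val.map u) := by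
  have hfib (c : ℕ) : Fintype.card {x // u x = c} = Fintype.card {y // v y = c} := by
    rw [card_fiber_eq_count, card_fiber_eq_count, h]
  let e₀ : α ≃ β := Equiv.ofFiberEquiv fun c => Fintype.equivOfCardEq (hfib c)
  have he₀ (x : α) : v (e₀ x) = u x := Equiv.ofFiberEquiv_map _ x
  have hstab : {e : α ≃ β // ∀ x, v (e x) = u x} ≃ {g : Equiv.Perm α // u ∘ g = u} :=
    { toFun := fun e => ⟨e.1.trans e₀.symm, funext fun x => by
        simp only [Function.comp_apply, Equiv.trans_apply, ← e.2 x, ← he₀,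
          Equiv.apply_symm_apply]⟩
      invFun := fun g => ⟨g.1.trans e₀, fun x => by
        simp only [Equiv.trans_apply, he₀]
        exact congrFun g.2 x⟩
      left_inv := fun e => by ext; simp
      right_inv := fun g => by ext; simp }
  rw [Nat.card_congr hstab, Nat.card_eq_fintype_card, DomMulAct.stabilizer_card']
  exact prod_congr rfl fun j _ => by rw [card_fiber_eq_count]

theorem multFact_pos (m : Multiset ℕ) : 0 < multFact m :=
  prod_pos fun _ _ => Nat.factorial_pos _

end CompatibleEquiv

namespace Finpartition

variable {V : Type} [Fintype V] [DecidableEq V] {π σ : Finpartition (univ : Finset V)}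

theorem ext_part (h : ∀ v, π.part v = σ.part v) : π = σ := by
  ext b
  constructor <;> intro hb
  · obtain ⟨v, hv⟩ := π.nonempty_of_mem_parts hb
    rw [← π.part_eq_of_mem hb hv, h]
    exact σ.part_mem.2 (mem_univ v)
  · obtain ⟨v, hv⟩ := σ.nonempty_of_mem_parts hb
    rw [← σ.part_eq_of_mem hb hv, ← h]
    exact π.part_mem.2 (mem_univ v)

theorem eq_of_le_of_card_parts_le (hle : π ≤ σ) (hcard : #π.parts ≤ #σ.parts) : π = σ := by
  choose f hf hfle using fun b (hb : b ∈ σ.parts) => exists_le_of_le hle hb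
  have hinj : ∀ b₁ b₂ (h₁ : b₁ ∈ σ.parts) (h₂ : b₂ ∈ σ.parts), f b₁ h₁ = f b₂ h₂ → b₁ = b₂ :=
    fun b₁ b₂ h₁ h₂ he => by
      obtain ⟨v, hv⟩ := π.nonempty_of_mem_parts (hf b₁ h₁)
      exact σ.eq_of_mem_parts h₁ h₂ (hfle b₁ h₁ hv) (hfle b₂ h₂ (he ▸ hv))
  have hsurj := surj_on_of_inj_on_of_card_le f hf hinj hcard
  refine le_antisymm hle fun b hb => ⟨f b hb, hf b hb, fun v hv => ?_⟩
  obtain ⟨b', hb', hfb'⟩ := hsurj (π.part v) (π.part_mem.2 (mem_univ v))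
  have hvb' : v ∈ b' := hfle b' hb' (hfb' ▸ π.mem_part (mem_univ v))
  obtain rfl := σ.eq_of_mem_parts hb hb' hv hvb'
  exact hfb' ▸ π.mem_part (mem_univ v)

variable (π) in
def partOf (v : V) : π.parts := ⟨π.part v, π.part_mem.2 (mem_univ v)⟩

theorem partOf_eq_iff {v : V} {b : π.parts} : π.partOf v = b ↔ v ∈ b.1 :=
  Subtype.ext_iff.trans (π.part_eq_iff_mem b.2)

theorem partOf_surjective : Function.Surjective π.partOf := fun b => by
  obtain ⟨v, hv⟩ := π.nonempty_of_mem_parts b.2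
  exact ⟨v, partOf_eq_iff.2 hv⟩

theorem partOf_eq_partOf_iff {v w : V} : π.partOf v = π.partOf w ↔ w ∈ π.part v :=
  eq_comm.trans partOf_eq_iff

end Finpartition

section TypeOf

variable {V : Type} [DecidableEq V] {s : Finset V}

theorem typeOf_eq_map_card (π : Finpartition s) :
    typeOf π = univ.val.map fun b : π.parts => #b.1 := by
  rw [typeOf, univ_eq_attach, attach_val]
  exact (Multiset.attach_map_val' _ _).symm

theorem card_parts_eq_card_typeOf (π : Finpartition s) : #π.parts = Multiset.card (typeOf π) :=
  (Multiset.card_map _ _).symm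

theorem pos_of_mem_typeOf {π : Finpartition s} {i : ℕ} (h : i ∈ typeOf π) : 0 < i := by
  obtain ⟨b, hb, rfl⟩ := Multiset.mem_map.1 h
  exact card_pos.2 (π.nonempty_of_mem_parts hb)

theorem sum_typeOf (π : Finpartition s) : (typeOf π).sum = #s :=
  π.sum_card_parts

end TypeOf

theorem expParts_eq_map (d : ℕ →₀ ℕ) : expParts d = univ.val.map fun c : d.support => d c := by
  rw [expParts, univ_eq_attach, attach_val]
  exact (Multiset.attach_map_val' _ _).symm

theorem expParts_toFinsupp {l : List ℕ} (hl : 0 ∉ l) : expParts l.toFinsupp = l := by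
  have hsupp : l.toFinsupp.support = range l.length := by
    ext i
    simp only [List.toFinsupp_support, mem_filter, mem_range, and_iff_left_iff_imp]
    intro h
    rw [List.getD_eq_getElem _ _ h]
    exact fun h0 => hl (h0 ▸ List.getElem_mem h)
  rw [expParts, hsupp, range_val, Multiset.range, Multiset.map_coe]
  congr 1
  refine List.ext_getElem (by simp) fun i h _ => ?_
  rw [List.getElem_map, List.getElem_range, List.toFinsupp_apply_lt]

section Colorings

open Finpartition

variable {V : Type} [Fintype V]

def IsProper (G : SimpleGraph V) (κ : V → ℕ) : Prop := ∀ v w, G.Adj v w → κ v ≠ κ w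

def HasContent (κ : V → ℕ) (d : ℕ →₀ ℕ) : Prop := ∀ c, #{v | κ v = c} = d c

theorem HasContent.mem_support {κ : V → ℕ} {d : ℕ →₀ ℕ} (h : HasContent κ d) (v : V) :
    κ v ∈ d.support :=
  Finsupp.mem_support_iff.2 ((h (κ v)).symm.trans_ne (card_ne_zero.2 ⟨v, by simp⟩))

variable [DecidableEq V]

def fiberPartition (κ : V → ℕ) : Finpartition (univ : Finset V) :=
  Finpartition.ofSetoid (Setoid.ker κ)

theorem mem_part_fiberPartition {κ : V → ℕ} {v w : V} :
    w ∈ (fiberPartition κ).part v ↔ κ v = κ w :=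
  Finpartition.mem_part_ofSetoid_iff_rel

variable {π : Finpartition (univ : Finset V)}

theorem fiberPartition_eq_iff {κ : V → ℕ} :
    fiberPartition κ = π ↔ ∀ v w, w ∈ π.part v ↔ κ v = κ w := by
  refine ⟨fun h => h ▸ fun v w => mem_part_fiberPartition, fun h => ?_⟩
  refine Finpartition.ext_part fun v => ?_
  ext w
  rw [mem_part_fiberPartition, h]

theorem isStable_of_fiberPartition_eq {G : SimpleGraph V} {κ : V → ℕ} (hκ : IsProper G κ)
    (h : fiberPartition κ = π) : IsStable G π := by
  intro b hb v hv w hw hadj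
  refine hκ v w hadj ((fiberPartition_eq_iff.1 h v w).1 ?_)
  rwa [π.part_eq_of_mem hb hv]

theorem IsStable.of_le {G : SimpleGraph V} {σ : Finpartition (univ : Finset V)}
    (hσ : IsStable G σ) (h : π ≤ σ) : IsStable G π :=
  fun b hb v hv w hw => by
    obtain ⟨c, hc, hbc⟩ := h hb
    exact hσ c hc v (hbc hv) w (hbc hw)

theorem exists_comp_partOf_eq {κ : V → ℕ} (hκ : fiberPartition κ = π) :
    ∃ f : π.parts → ℕ, f.Injective ∧ f ∘ π.partOf = κ := by
  have hker (v w : V) : π.partOf v = π.partOf w ↔ κ v = κ w :=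
    partOf_eq_partOf_iff.trans (fiberPartition_eq_iff.1 hκ v w)
  have hs := Function.surjInv_eq (partOf_surjective (π := π))
  refine ⟨κ ∘ Function.surjInv partOf_surjective, fun b b' h => ?_,
    funext fun v => (hker _ _).1 (hs _)⟩
  simpa only [hs] using (hker _ _).2 h

section Labelling

variable {f : π.parts → ℕ}

theorem fiberPartition_comp_partOf (hf : f.Injective) : fiberPartition (f ∘ π.partOf) = π :=
  fiberPartition_eq_iff.2 fun v w => by
    rw [Function.comp_apply, Function.comp_apply, hf.eq_iff, partOf_eq_partOf_iff]

theorem filter_comp_partOf_eq (hf : f.Injective) (b : π.parts) : ({v | f (π.partOf v) = f b} : Finset V) = b.1 := by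
  ext v
  rw [mem_filter, hf.eq_iff, partOf_eq_iff, and_iff_right (mem_univ v)]

theorem isProper_comp_partOf (hf : f.Injective) {G : SimpleGraph V} (hπ : IsStable G π) :
    IsProper G (f ∘ π.partOf) := fun v w hadj h =>
  hπ _ (π.part_mem.2 (mem_univ v)) v (π.mem_part (mem_univ v)) w
    (partOf_eq_partOf_iff.1 (hf h)) hadj

theorem hasContent_comp_partOf_iff (hf : f.Injective) (d : ℕ →₀ ℕ) :
    HasContent (f ∘ π.partOf) d ↔
      (∀ b, d (f b) = #b.1) ∧ ∀ c ∈ d.support, c ∈ Set.range f := by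
  constructor
  · intro h
    refine ⟨fun b => ?_, fun c hc => ?_⟩
    · rw [← h, Function.comp_def, filter_comp_partOf_eq hf]
    · obtain ⟨v, hv⟩ :=
        card_pos.1 (Nat.pos_of_ne_zero ((h c).trans_ne (Finsupp.mem_support_iff.1 hc)))
      exact ⟨_, (mem_filter.1 hv).2⟩
  · rintro ⟨hcard, hrange⟩ c
    by_cases hc : c ∈ Set.range f
    · obtain ⟨b, rfl⟩ := hc
      rw [Function.comp_def, filter_comp_partOf_eq hf, hcard]
    · rw [Finsupp.notMem_support_iff.1 (mt (hrange c) hc), card_eq_zero, filter_eq_empty_iff]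
      exact fun v _ hv => hc ⟨_, hv⟩

end Labelling

theorem exists_equiv_of_fiberPartition_eq {κ : V → ℕ} {d : ℕ →₀ ℕ}
    (hκ : fiberPartition κ = π) (hcontent : HasContent κ d) :
    ∃ e : π.parts ≃ d.support, (∀ b, d (e b) = #b.1) ∧ Subtype.val ∘ e ∘ π.partOf = κ := by
  obtain ⟨f, hf, rfl⟩ := exists_comp_partOf_eq hκ
  obtain ⟨hcard, hrange⟩ := (hasContent_comp_partOf_iff hf d).1 hcontent
  have hsupp (b : π.parts) : f b ∈ d.support := Finsupp.mem_support_iff.2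
    ((hcard b).trans_ne (card_ne_zero.2 (π.nonempty_of_mem_parts b.2)))
  exact ⟨Equiv.ofBijective (fun b => ⟨f b, hsupp b⟩)
    ⟨fun b b' h => hf (congrArg Subtype.val h),
      fun c => (hrange c c.2).imp fun b hb => Subtype.ext hb⟩, hcard, rfl⟩

theorem typeOf_eq_expParts_of_equiv {d : ℕ →₀ ℕ} {e : π.parts ≃ d.support}
    (he : ∀ b, d (e b) = #b.1) : typeOf π = expParts d := by
  rw [typeOf_eq_map_card, expParts_eq_map, ← Multiset.map_univ_val_equiv e, Multiset.map_map]
  exact Multiset.map_congr rfl fun b _ => (he b).symm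

theorem typeOf_fiberPartition {κ : V → ℕ} {d : ℕ →₀ ℕ} (h : HasContent κ d) :
    typeOf (fiberPartition κ) = expParts d :=
  let ⟨_, he, _⟩ := exists_equiv_of_fiberPartition_eq rfl h
  typeOf_eq_expParts_of_equiv he

theorem card_equiv_parts_support (π : Finpartition (univ : Finset V)) (d : ℕ →₀ ℕ) :
    Nat.card {e : π.parts ≃ d.support // ∀ b, d (e b) = #b.1} =
      if typeOf π = expParts d then multFact (typeOf π) else 0 := by
  split_ifs with h
  · rw [typeOf_eq_map_card] at h ⊢
    exact card_equiv_comp_eq _ _ (h.trans (expParts_eq_map d))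
  · have : IsEmpty {e : π.parts ≃ d.support // ∀ b, d (e b) = #b.1} :=
      ⟨fun e => h (typeOf_eq_expParts_of_equiv e.2)⟩
    exact Nat.card_of_isEmpty

theorem card_colorings_fiberPartition_eq {G : SimpleGraph V} (hπ : IsStable G π)
    (d : ℕ →₀ ℕ) :
    Nat.card {κ : V → ℕ // (IsProper G κ ∧ HasContent κ d) ∧ fiberPartition κ = π} =
      Nat.card {e : π.parts ≃ d.support // ∀ b, d (e b) = #b.1} := by
  let Ψ (e : {e : π.parts ≃ d.support // ∀ b, d (e b) = #b.1}) :
      {κ : V → ℕ // (IsProper G κ ∧ HasContent κ d) ∧ fiberPartition κ = π} :=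
    have hf : (Subtype.val ∘ e.1).Injective := Subtype.val_injective.comp e.1.injective
    ⟨Subtype.val ∘ e.1 ∘ π.partOf,
      ⟨isProper_comp_partOf hf hπ, (hasContent_comp_partOf_iff hf d).2
        ⟨e.2, fun c hc => ⟨e.1.symm ⟨c, hc⟩, by simp⟩⟩⟩, fiberPartition_comp_partOf hf⟩
  refine (Nat.card_eq_of_bijective Ψ ⟨fun e e' h => ?_, fun κ => ?_⟩).symm
  · ext b
    obtain ⟨v, rfl⟩ := partOf_surjective b
    exact congrFun (congrArg Subtype.val h) v
  · obtain ⟨e, he, hκ⟩ := exists_equiv_of_fiberPartition_eq κ.2.2 κ.2.1.2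
    exact ⟨⟨e, he⟩, Subtype.ext hκ⟩

theorem card_colorings_eq_sum (G : SimpleGraph V) (d : ℕ →₀ ℕ) :
    Nat.card {κ : V → ℕ // IsProper G κ ∧ HasContent κ d} =
      ∑ π with IsStable G π, if typeOf π = expParts d then multFact (typeOf π) else 0 := by
  have : Finite {κ : V → ℕ // IsProper G κ ∧ HasContent κ d} :=
    Finite.of_injective (fun κ v => (⟨κ.1 v, κ.2.2.mem_support v⟩ : d.support))
      fun κ κ' h => Subtype.ext (funext fun v => congrArg Subtype.val (congrFun h v))
  rw [Nat.card_congr (Equiv.sigmaFiberEquiv fun κ : {κ // _} => fiberPartition κ.1).symm,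
    Nat.card_sigma, sum_filter]
  refine sum_congr rfl fun π _ => ?_
  rw [Nat.card_congr (Equiv.subtypeSubtypeEquivSubtypeInter _ (fiberPartition · = π))]
  by_cases hπ : IsStable G π
  · rw [if_pos hπ, card_colorings_fiberPartition_eq hπ, card_equiv_parts_support]
  · rw [if_neg hπ]
    have : IsEmpty {κ // (IsProper G κ ∧ HasContent κ d) ∧ fiberPartition κ = π} :=
      ⟨fun κ => hπ (isStable_of_fiberPartition_eq κ.2.1.1 κ.2.2)⟩
    exact Nat.card_of_isEmpty

theorem csf_eq_sum_mtilde (G : SimpleGraph V) :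
    csf G = ∑ π with IsStable G π, mtilde (typeOf π) := by
  refine MvPowerSeries.ext fun d => ?_
  rw [map_sum, MvPowerSeries.coeff_apply]
  change (Nat.card {κ // IsProper G κ ∧ HasContent κ d} : ℚ) = _
  rw [card_colorings_eq_sum, Nat.cast_sum]
  refine sum_congr rfl fun π _ => ?_
  rw [MvPowerSeries.coeff_apply, mtilde, eq_comm]
  split_ifs <;> simp_all

end Colorings

section Multipartite

open Finpartition

variable {l : List ℕ}

theorem card_univ_multipartite (l : List ℕ) :
    #(univ : Finset (Σ j : Fin l.length, Fin (l.get j))) = l.sum := by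
  rw [card_univ, Fintype.card_sigma]
  simp only [Fintype.card_fin]
  rw [← List.sum_ofFn, List.ofFn_get]

def column (v : Σ j : Fin l.length, Fin (l.get j)) : ℕ := v.1

theorem isProper_column : IsProper (multipartite l) column := fun _ _ hadj h =>
  hadj (Fin.ext h)

theorem hasContent_column : HasContent (column (l := l)) l.toFinsupp := fun c => by
  change #{v : Σ j : Fin l.length, Fin (l.get j) | (v.1 : ℕ) = c} = _
  rw [card_filter, Fintype.sum_sigma, List.toFinsupp_apply]
  by_cases hc : c < l.length
  · rw [List.getD_eq_getElem _ _ hc, Fintype.sum_eq_single ⟨c, hc⟩ fun j hj => ?_]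
    · simp
    · simp [Fin.ext_iff.not.mp hj]
  · rw [List.getD_eq_default _ _ (not_lt.1 hc)]
    exact sum_eq_zero fun j _ => by simp [(j.2.trans_le (not_lt.1 hc)).ne]

variable (l) in
def columnPartition : Finpartition (univ : Finset (Σ j : Fin l.length, Fin (l.get j))) :=
  fiberPartition column

theorem mem_part_columnPartition {v w : Σ j : Fin l.length, Fin (l.get j)} :
    w ∈ (columnPartition l).part v ↔ v.1 = w.1 :=
  mem_part_fiberPartition.trans Fin.val_inj

theorem isStable_columnPartition : IsStable (multipartite l) (columnPartition l) :=
  isStable_of_fiberPartition_eq isProper_column rfl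

theorem typeOf_columnPartition (hl : 0 ∉ l) : typeOf (columnPartition l) = l :=
  (typeOf_fiberPartition hasContent_column).trans (expParts_toFinsupp hl)

theorem card_parts_columnPartition (hl : 0 ∉ l) : #(columnPartition l).parts = l.length := by
  rw [card_parts_eq_card_typeOf, typeOf_columnPartition hl, Multiset.coe_card]

variable {π : Finpartition (univ : Finset (Σ j : Fin l.length, Fin (l.get j)))}

theorem IsStable.fst_eq (hπ : IsStable (multipartite l) π) {b} (hb : b ∈ π.parts) {v w}
    (hv : v ∈ b) (hw : w ∈ b) : v.1 = w.1 :=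
  not_not.1 (hπ b hb v hv w hw)

theorem isStable_iff_le_columnPartition : IsStable (multipartite l) π ↔ π ≤ columnPartition l := by
  refine ⟨fun hπ b hb => ?_, fun h => isStable_columnPartition.of_le h⟩
  obtain ⟨v, hv⟩ := π.nonempty_of_mem_parts hb
  exact ⟨_, (columnPartition l).part_mem.2 (mem_univ v), fun w hw =>
    mem_part_columnPartition.2 (hπ.fst_eq hb hv hw)⟩

theorem eq_columnPartition (hstable : IsStable (multipartite l) π)
    (hmax : ∀ b1 ∈ π.parts, ∀ b2 ∈ π.parts, b1 ≠ b2 →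
        ∃ v ∈ b1, ∃ w ∈ b2, (multipartite l).Adj v w) :
    π = columnPartition l := by
  refine le_antisymm (isStable_iff_le_columnPartition.1 hstable) fun b hb => ?_
  obtain ⟨v, hv⟩ := (columnPartition l).nonempty_of_mem_parts hb
  refine ⟨π.part v, π.part_mem.2 (mem_univ v), fun w hw => ?_⟩
  by_contra hwv
  have hne : π.part v ≠ π.part w := fun h => hwv (h ▸ π.mem_part (mem_univ w))
  obtain ⟨x, hx, y, hy, hxy⟩ :=
    hmax _ (π.part_mem.2 (mem_univ v)) _ (π.part_mem.2 (mem_univ w)) hne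
  have hvw : v.1 = w.1 :=
    mem_part_columnPartition.1 ((columnPartition l).part_eq_of_mem hb hv ▸ hw)
  have hvx := hstable.fst_eq (π.part_mem.2 (mem_univ v)) (π.mem_part (mem_univ v)) hx
  have hwy := hstable.fst_eq (π.part_mem.2 (mem_univ w)) (π.mem_part (mem_univ w)) hy
  exact hxy (hvx.symm.trans (hvw.trans hwy))

theorem coeff_csf_multipartite (hl : 0 ∉ l) {d : ℕ →₀ ℕ}
    (hd : Multiset.card (expParts d) ≤ l.length) :
    MvPowerSeries.coeff d (csf (multipartite l)) =
      if expParts d = l then (multFact l : ℚ) else 0 := by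
  rw [csf_eq_sum_mtilde, map_sum, sum_eq_single_of_mem (columnPartition l)
    (mem_filter.2 ⟨mem_univ _, isStable_columnPartition⟩)]
  · rw [MvPowerSeries.coeff_apply, mtilde, typeOf_columnPartition hl]
  · intro π hπ hne
    rw [MvPowerSeries.coeff_apply, mtilde, if_neg]
    intro h
    refine hne (eq_of_le_of_card_parts_le
      (isStable_iff_le_columnPartition.1 (mem_filter.1 hπ).2) ?_)
    rwa [card_parts_eq_card_typeOf, ← h, card_parts_columnPartition hl]

end Multipartite

theorem linearIndependent_rOf (n : ℕ) :
    LinearIndependent ℚ fun ν : Nat.Partition n => rOf ν.parts := by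
  rw [Fintype.linearIndependent_iff]
  intro g hg
  by_contra! hne
  obtain ⟨ν₀, hν₀, hmin⟩ := exists_min_image {ν | g ν ≠ 0} (fun ν => Multiset.card ν.parts)
    (filter_nonempty_iff.2 (by simpa using hne))
  have hν₀ : g ν₀ ≠ 0 := (mem_filter.1 hν₀).2
  have h0 (ν : Nat.Partition n) : 0 ∉ ν.parts.toList := fun h =>
    (ν.parts_pos (Multiset.mem_toList.1 h)).ne rfl
  have hd : expParts ν₀.parts.toList.toFinsupp = ν₀.parts := by
    rw [expParts_toFinsupp (h0 ν₀), Multiset.coe_toList]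
  have hterm (ν : Nat.Partition n) :
      g ν * MvPowerSeries.coeff ν₀.parts.toList.toFinsupp (rOf ν.parts) =
        if ν = ν₀ then g ν₀ * multFact ν₀.parts else 0 := by
    by_cases hν : g ν = 0
    · rw [hν, zero_mul, eq_comm, ite_eq_right_iff]
      rintro rfl
      exact absurd hν hν₀
    · rw [rOf, coeff_csf_multipartite (h0 ν), hd, Multiset.coe_toList]
      · by_cases h : ν = ν₀
        · subst h
          simp
        · rw [if_neg fun h' => h (Nat.Partition.ext h'.symm), if_neg h, mul_zero]
      · rw [hd, Multiset.length_toList]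
        exact hmin ν (mem_filter.2 ⟨mem_univ ν, hν⟩)
  have := congrArg (MvPowerSeries.coeff ν₀.parts.toList.toFinsupp) hg
  simp only [map_sum, map_smul, smul_eq_mul, hterm, sum_ite_eq', mem_univ, if_true,
    map_zero] at this
  exact mul_ne_zero hν₀ (Nat.cast_ne_zero.2 (multFact_pos _).ne') this

theorem stmt10_general (n : ℕ) (lam : Nat.Partition n)
    (P : Finpartition (Finset.univ :
        Finset (Σ j : Fin lam.parts.toList.length, Fin (lam.parts.toList.get j))))
    (hstable : IsStable (multipartite lam.parts.toList) P)
    (hmax : ∀ b1 ∈ P.parts, ∀ b2 ∈ P.parts, b1 ≠ b2 →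
        ∃ v ∈ b1, ∃ w ∈ b2, (multipartite lam.parts.toList).Adj v w)
    (a : Multiset ℕ → Nat.Partition n → ℚ)
    (ha : ∀ nu : Nat.Partition n,
        mtilde nu.parts = ∑ mu : Nat.Partition n, a nu.parts mu • rOf mu.parts)
    (mu : Nat.Partition n) :
    ∑ pi ∈ Finset.univ.filter
        (fun pi : Finpartition (Finset.univ :
            Finset (Σ j : Fin lam.parts.toList.length, Fin (lam.parts.toList.get j))) =>
          pi ≤ P),
      a (typeOf pi) mu = if lam = mu then 1 else 0 := by
  have hcard : #(univ : Finset (Σ j : Fin lam.parts.toList.length,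
      Fin (lam.parts.toList.get j))) = n := by
    rw [card_univ_multipartite, Multiset.sum_toList, lam.parts_sum]
  have hexpand : rOf lam.parts = ∑ μ, (∑ π with π ≤ P, a (typeOf π) μ) • rOf μ.parts :=
    calc rOf lam.parts = ∑ π with π ≤ P, mtilde (typeOf π) := by
          rw [rOf, csf_eq_sum_mtilde, eq_columnPartition hstable hmax]
          simp_rw [isStable_iff_le_columnPartition]
      _ = ∑ π with π ≤ P, ∑ μ, a (typeOf π) μ • rOf μ.parts :=
          sum_congr rfl fun π _ => ha ⟨typeOf π, pos_of_mem_typeOf, by rw [sum_typeOf, hcard]⟩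
      _ = _ := by
          rw [sum_comm]
          simp_rw [sum_smul]
  refine Fintype.linearIndependent_iffₛ.1 (linearIndependent_rOf n)
    (fun μ => ∑ π with π ≤ P, a (typeOf π) μ) (fun μ => if lam = μ then 1 else 0) ?_ mu
  rw [← hexpand]
  simp [ite_smul]

/-- Lemma 1: for the complete multipartite graph `G_λ` with maximal stable partition `P`
of type `λ`, and any `μ ⊢ n`, the sum over all partitions `π` refining `P` of the
`r_μ`-coefficient of `m̃_{λ(π)}` is the Kronecker delta `δ_{λ,μ}`.  Here the
`r`-expansion coefficients are given by any family `a` with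
`m̃_ν = ∑_μ a ν μ • r_μ` (such coefficients are unique since the `r`'s form a basis). -/
theorem stmt10 (n : ℕ) (lam : Nat.Partition n)
    (P : Finpartition (Finset.univ :
        Finset (Σ j : Fin lam.parts.toList.length, Fin (lam.parts.toList.get j))))
    (hstable : IsStable (multipartite lam.parts.toList) P)
    (hmax : ∀ b1 ∈ P.parts, ∀ b2 ∈ P.parts, b1 ≠ b2 →
        ∃ v ∈ b1, ∃ w ∈ b2, (multipartite lam.parts.toList).Adj v w)
    (htype : typeOf P = lam.parts)
    (a : Multiset ℕ → Nat.Partition n → ℚ)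
    (ha : ∀ nu : Nat.Partition n,
        mtilde nu.parts = ∑ mu : Nat.Partition n, a nu.parts mu • rOf mu.parts)
    (mu : Nat.Partition n) :
    ∑ pi ∈ Finset.univ.filter
        (fun pi : Finpartition (Finset.univ :
            Finset (Σ j : Fin lam.parts.toList.length, Fin (lam.parts.toList.get j))) =>
          pi ≤ P),
      a (typeOf pi) mu = if lam = mu then 1 else 0 :=
  stmt10_general n lam P hstable hmax a ha mu
end
end

section
/- For every partition π of V(G) with e(π) ≤ j (at most j edges inside blocks), there exists an i-maximal partition M of V(G) with i ≤ j such that π refines M. -/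
open Finset
open scoped Classical

noncomputable section

/-- The number of edges of `G` with both endpoints in the same block of `π`. -/
def eInside {V : Type} [Fintype V] [DecidableEq V] (G : SimpleGraph V)
    (P : Finpartition (Finset.univ : Finset V)) : ℕ :=
  Nat.card {ed : Sym2 V // ed ∈ G.edgeSet ∧ ∃ b ∈ P.parts, ∀ v ∈ ed, v ∈ b}

/-- A partition is `i`-maximal if it has exactly `i` edges inside blocks and there is
at least one edge between every pair of distinct blocks. -/
def IsIMaximal {V : Type} [Fintype V] [DecidableEq V] (G : SimpleGraph V)
    (P : Finpartition (Finset.univ : Finset V)) (i : ℕ) : Prop :=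
  eInside G P = i ∧ ∀ b1 ∈ P.parts, ∀ b2 ∈ P.parts, b1 ≠ b2 →
    ∃ v ∈ b1, ∃ w ∈ b2, G.Adj v w

/-- The Tutte symmetric function `XB_G = ∑_{π ⊢ V(G)} (1+t)^{e(π)} m̃_{λ(π)}`,
as a polynomial in `t` with symmetric-function coefficients. -/
def tutteXB {V : Type} [Fintype V] [DecidableEq V] (G : SimpleGraph V) :
    Polynomial (MvPowerSeries ℕ ℚ) :=
  ∑ P : Finpartition (Finset.univ : Finset V),
    (1 + Polynomial.X) ^ (eInside G P) * Polynomial.C (mtilde (typeOf P))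

/-!
Among the coarsenings `M` of `π` with `e(M) ≤ j`, take one with the fewest blocks. If two of its
blocks had no edge between them, merging them would create no new inner edge, giving a coarsening
with fewer blocks that is still admissible.
-/

namespace Finpartition

variable {α : Type*} [DistribLattice α] [OrderBot α] [DecidableEq α] {a b₁ b₂ : α}

def mergeParts (P : Finpartition a) (h₁ : b₁ ∈ P.parts) (h₂ : b₂ ∈ P.parts) (hne : b₁ ≠ b₂) :
    Finpartition a where
  parts := insert (b₁ ⊔ b₂) ((P.parts.erase b₁).erase b₂)
  supIndep := by
    rw [Finset.supIndep_iff_pairwiseDisjoint, coe_insert]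
    refine (P.disjoint.subset ?_).insert fun c hc _ => ?_
    · exact coe_subset.2 ((erase_subset _ _).trans (erase_subset _ _))
    · simp only [coe_erase, Set.mem_sdiff, Set.mem_singleton_iff, mem_coe] at hc
      exact disjoint_sup_left.2
        ⟨P.disjoint h₁ hc.1.1 (Ne.symm hc.1.2), P.disjoint h₂ hc.1.1 (Ne.symm hc.2)⟩
  sup_parts := by
    conv_rhs => rw [← P.sup_parts, ← insert_erase h₁,
      ← insert_erase (mem_erase_of_ne_of_mem hne.symm h₂)]
    simp only [sup_insert, id, sup_assoc]
  bot_notMem h := by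
    rcases mem_insert.1 h with h | h
    · exact P.ne_bot h₁ (le_bot_iff.1 (le_sup_left.trans h.ge))
    · exact P.bot_notMem (mem_of_mem_erase (mem_of_mem_erase h))

variable {P : Finpartition a} {h₁ : b₁ ∈ P.parts} {h₂ : b₂ ∈ P.parts} {hne : b₁ ≠ b₂}

theorem mem_mergeParts {c : α} :
    c ∈ (P.mergeParts h₁ h₂ hne).parts ↔ c = b₁ ⊔ b₂ ∨ c ≠ b₂ ∧ c ≠ b₁ ∧ c ∈ P.parts := by
  simp [mergeParts]

theorem le_mergeParts : P ≤ P.mergeParts h₁ h₂ hne := by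
  intro c hc
  by_cases hc₁ : c = b₁
  · exact ⟨b₁ ⊔ b₂, mem_mergeParts.2 (Or.inl rfl), hc₁ ▸ le_sup_left⟩
  by_cases hc₂ : c = b₂
  · exact ⟨b₁ ⊔ b₂, mem_mergeParts.2 (Or.inl rfl), hc₂ ▸ le_sup_right⟩
  exact ⟨c, mem_mergeParts.2 (Or.inr ⟨hc₂, hc₁, hc⟩), le_rfl⟩

theorem card_mergeParts_lt : #(P.mergeParts h₁ h₂ hne).parts < #P.parts :=
  calc #(P.mergeParts h₁ h₂ hne).parts ≤ #((P.parts.erase b₁).erase b₂) + 1 := card_insert_le _ _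
    _ = #(P.parts.erase b₁) := card_erase_add_one (mem_erase_of_ne_of_mem hne.symm h₂)
    _ < #P.parts := card_erase_lt_of_mem h₁

end Finpartition

section

variable {V : Type} [Fintype V] [DecidableEq V] (G : SimpleGraph V)

theorem eInside_le_eInside_of_forall_adj {P Q : Finpartition (univ : Finset V)}
    (h : ∀ v w, G.Adj v w → (∃ c ∈ Q.parts, v ∈ c ∧ w ∈ c) → ∃ b ∈ P.parts, v ∈ b ∧ w ∈ b) :
    eInside G Q ≤ eInside G P := by
  refine Nat.card_le_card_of_injective (Subtype.map id fun e he => ⟨he.1, ?_⟩)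
    (Subtype.map_injective _ Function.injective_id)
  obtain ⟨hadj, c, hc, hec⟩ := he
  induction e using Sym2.ind with
  | _ v w =>
    obtain ⟨b, hb, hvb, hwb⟩ :=
      h v w hadj ⟨c, hc, hec v (Sym2.mem_mk_left v w), hec w (Sym2.mem_mk_right v w)⟩
    exact ⟨b, hb, fun x hx => by rcases Sym2.mem_iff.1 hx with rfl | rfl <;> assumption⟩

theorem eInside_mergeParts_le {P : Finpartition (univ : Finset V)} {b₁ b₂ : Finset V}
    (h₁ : b₁ ∈ P.parts) (h₂ : b₂ ∈ P.parts) (hne : b₁ ≠ b₂)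
    (hno : ∀ v ∈ b₁, ∀ w ∈ b₂, ¬ G.Adj v w) :
    eInside G (P.mergeParts h₁ h₂ hne) ≤ eInside G P := by
  refine eInside_le_eInside_of_forall_adj G fun v w hvw ⟨c, hc, hv, hw⟩ => ?_
  rcases Finpartition.mem_mergeParts.1 hc with rfl | ⟨-, -, hc⟩
  · rcases mem_union.1 hv with hv | hv <;> rcases mem_union.1 hw with hw | hw
    · exact ⟨b₁, h₁, hv, hw⟩
    · exact absurd hvw (hno v hv w hw)
    · exact absurd hvw.symm (hno w hw v hv)
    · exact ⟨b₂, h₂, hv, hw⟩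
  · exact ⟨c, hc, hv, hw⟩

end

/-- Every partition `π` of `V(G)` with at most `j` edges inside blocks refines some
`i`-maximal partition with `i ≤ j`. -/
theorem stmt13 {V : Type} [Fintype V] [DecidableEq V] (G : SimpleGraph V)
    (j : ℕ) (P : Finpartition (Finset.univ : Finset V)) (h : eInside G P ≤ j) :
    ∃ (M : Finpartition (Finset.univ : Finset V)) (i : ℕ),
      i ≤ j ∧ IsIMaximal G M i ∧ P ≤ M := by
  obtain ⟨M, hM, hmin⟩ := exists_min_image (univ.filter fun M => P ≤ M ∧ eInside G M ≤ j)
    (fun M => #M.parts) ⟨P, mem_filter.2 ⟨mem_univ _, le_rfl, h⟩⟩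
  obtain ⟨-, hPM, hMj⟩ := mem_filter.1 hM
  refine ⟨M, eInside G M, hMj, ⟨rfl, fun b₁ h₁ b₂ h₂ hne => ?_⟩, hPM⟩
  by_contra! hno
  have hmerge := hmin (M.mergeParts h₁ h₂ hne) (mem_filter.2 ⟨mem_univ _,
    hPM.trans Finpartition.le_mergeParts, (eInside_mergeParts_le G h₁ h₂ hne hno).trans hMj⟩)
  exact Finpartition.card_mergeParts_lt.not_ge hmerge
end
end
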